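/- Let C be a coalgebra over a field k and let T : C-Comod_f → Vect_k^f be the forgetful functor from finite-dimensional right C-comodules to finite-dimensional k-vector spaces. Define linear maps i_X : Hom_k(X, X) → C for each finite-dimensional right C-comodule X by i_X(β ⊗ x) := β(x_(0)) x_(1), where β ∈ X*, x ∈ X, (β ⊗ x)(y) = β(y)x, and ρ(x) = x_(0) ⊗ x_(1) is the coaction. Then (C, {i_X}) is a realization of Coend(T); that is, C with these maps satisfies the universal (initial) property of the coend of T. In particular, C can be reconstructed from Coend(T) as a vector space. -/

import Mathlib

/- STATEMENT 3: for a k-coalgebra C and the forgetful functor T from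
finite-dimensional right C-comodules to Vect_k^f, the maps
i_X(β ⊗ x) = β(x₍₀₎) x₍₁₎ make C a realization of Coend(T): they form a
dinatural family and (C, {i_X}) is initial among such data. -/

open TensorProduct

noncomputable section
variable (k : Type) [Field k]
variable (C : Type) [AddCommGroup C] [Module k C] [Coalgebra k C]

/-- A finite-dimensional right `C`-comodule. -/
structure FdComod where
  carrier : Type
  [ab : AddCommGroup carrier]
  [mod : Module k carrier]
  [fin : FiniteDimensional k carrier]
  ρ : carrier →ₗ[k] carrier ⊗[k] C
  coassoc : (TensorProduct.assoc k carrier C C).toLinearMap ∘ₗ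
      (TensorProduct.map ρ LinearMap.id) ∘ₗ ρ
      = (TensorProduct.map LinearMap.id Coalgebra.comul) ∘ₗ ρ
  counit : (TensorProduct.map LinearMap.id Coalgebra.counit) ∘ₗ ρ
      = (TensorProduct.rid k carrier).symm.toLinearMap

attribute [instance] FdComod.ab FdComod.mod FdComod.fin

/-- A morphism of right `C`-comodules. -/
def IsComodHom (X Y : FdComod k C) (f : X.carrier →ₗ[k] Y.carrier) : Prop :=
  Y.ρ ∘ₗ f = (TensorProduct.map f LinearMap.id) ∘ₗ X.ρ

/-- Dinaturality of a family of maps `Hom_k(X,X) → U` indexed by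
finite-dimensional right `C`-comodules: `i_X(f ∘ S) = i_Y(S ∘ f)` for any
comodule morphism `f : Y → X` and linear map `S : X → Y`. -/
def DinatComod (U : Type) [AddCommGroup U] [Module k U]
    (i : ∀ X : FdComod k C, (X.carrier →ₗ[k] X.carrier) →ₗ[k] U) : Prop :=
  ∀ (X Y : FdComod k C) (f : Y.carrier →ₗ[k] X.carrier), IsComodHom k C Y X f →
    ∀ S : X.carrier →ₗ[k] Y.carrier, i X (f ∘ₗ S) = i Y (S ∘ₗ f)

/-- The canonical maps `i_X : Hom_k(X,X) → C`; on a rank-one map `β ⊗ x`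
(i.e. `y ↦ β(y)x`) it is given by `β(x₍₀₎) x₍₁₎`. -/
def canI (X : FdComod k C) : (X.carrier →ₗ[k] X.carrier) →ₗ[k] C :=
  let b := Module.Free.chooseBasis k X.carrier
  ∑ j, ((TensorProduct.lid k C).toLinearMap ∘ₗ
          TensorProduct.map (b.coord j) LinearMap.id ∘ₗ X.ρ) ∘ₗ
        (LinearMap.applyₗ (b j) : (X.carrier →ₗ[k] X.carrier) →ₗ[k] X.carrier)

/-! Every `c : C` lies in a finite-dimensional right coideal `D` (the span of the slices
`(id ⊗ f)(Δ c)`), which is a comodule with `i_D(ε|_D ⊗ c) = c`; this forces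
`φ c = iU_D(ε|_D ⊗ c)`. Dinaturality along inclusions of coideals makes this independent of `D`,
and dinaturality along the comodule maps `x ↦ β(x₍₀₎)x₍₁₎`, corestricted to their ranges, shows
that `φ ∘ i_X = iU_X`. -/

open LinearMap

namespace TensorProduct

variable {R V V' W : Type*} [CommSemiring R] [AddCommMonoid V] [Module R V] [AddCommMonoid V']
  [Module R V'] [AddCommMonoid W] [Module R W]

def rightSlice (f : W →ₗ[R] R) : V ⊗[R] W →ₗ[R] V :=
  TensorProduct.rid R V ∘ₗ f.lTensor V

@[simp]
lemma rightSlice_tmul (f : W →ₗ[R] R) (v : V) (w : W) :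
    rightSlice f (v ⊗ₜ[R] w) = f w • v := rfl

lemma rightSlice_comp {W' : Type*} [AddCommMonoid W'] [Module R W'] (f : W' →ₗ[R] R)
    (g : W →ₗ[R] W') : rightSlice (V := V) (f ∘ₗ g) = rightSlice f ∘ₗ g.lTensor V := by
  rw [rightSlice, rightSlice, lTensor_comp, comp_assoc]

lemma rightSlice_rTensor (f : W →ₗ[R] R) (g : V →ₗ[R] V') (t : V ⊗[R] W) :
    rightSlice f (g.rTensor W t) = g (rightSlice f t) := by
  induction t with
  | zero => simp
  | tmul v w => simp
  | add s t hs ht => simp only [map_add, hs, ht]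

lemma rightSlice_mem_of_mem_range_rTensor {D : Submodule R V} {t : V ⊗[R] W}
    (ht : t ∈ range (D.subtype.rTensor W)) (f : W →ₗ[R] R) : rightSlice f t ∈ D := by
  obtain ⟨s, rfl⟩ := ht
  rw [rightSlice_rTensor]
  exact (rightSlice f s).2

/-- Expanding `t` along a basis `bᵢ` of `W` gives `t = ∑ tᵢ ⊗ bᵢ` whose coefficients `tᵢ` are
slices of `t`. -/
lemma mem_range_rTensor_of_forall_rightSlice_mem [Module.Free R W] {D : Submodule R V}
    {t : V ⊗[R] W} (h : ∀ f : W →ₗ[R] R, rightSlice f t ∈ D) :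
    t ∈ range (D.subtype.rTensor W) := by
  classical
  let b := Module.Free.chooseBasis R W
  let e := equivFinsuppOfBasisRight (M := V) b
  have coeff_eq : ∀ i (s : V ⊗[R] W), e s i = rightSlice (b.coord i) s := by
    intro i s
    induction s with
    | zero => simp
    | tmul v w => simp [e]
    | add s s' hs hs' => simp only [map_add, Finsupp.add_apply, hs, hs']
  rw [← e.symm_apply_apply t, equivFinsuppOfBasisRight_symm_apply]
  refine Submodule.finsuppSum_mem _ _ _ _ fun i _ => ⟨⟨e t i, ?_⟩ ⊗ₜ[R] b i, rfl⟩
  rw [coeff_eq]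
  exact h _

end TensorProduct

lemma Submodule.rTensor_subtype_injective {R V W : Type*} [CommRing R] [AddCommGroup V]
    [Module R V] [AddCommGroup W] [Module R W] [Module.Flat R W] (D : Submodule R V) :
    Function.Injective (D.subtype.rTensor W) :=
  Module.Flat.rTensor_preserves_injective_linearMap _ D.injective_subtype

namespace LinearMap

variable {R V V' W W' U : Type*} [CommSemiring R] [AddCommMonoid V] [Module R V]
  [AddCommMonoid V'] [Module R V'] [AddCommMonoid W] [Module R W] [AddCommMonoid W']
  [Module R W'] [AddCommMonoid U] [Module R U]

lemma comp_smulRight (f : W →ₗ[R] W') (β : V →ₗ[R] R) (w : W) :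
    f ∘ₗ β.smulRight w = β.smulRight (f w) := by
  ext
  simp

lemma smulRight_comp (β : V →ₗ[R] R) (w : W) (f : V' →ₗ[R] V) :
    β.smulRight w ∘ₗ f = (β ∘ₗ f).smulRight w := by
  ext
  simp

lemma ext_smulRight [Module.Finite R V] [Module.Projective R V] {P Q : (V →ₗ[R] W) →ₗ[R] U}
    (h : ∀ (β : V →ₗ[R] R) (w : W), P (β.smulRight w) = Q (β.smulRight w)) : P = Q := by
  have hsurj := (dualTensorHom_bijective (R := R) (M := V) (N := W)).surjective
  refine (cancel_right hsurj).mp (TensorProduct.ext' fun β w => ?_)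
  have rankOne : dualTensorHom R V W (β ⊗ₜ w) = β.smulRight w := by
    ext v
    simp [dualTensorHom_apply]
  simpa only [comp_apply, rankOne] using h β w

end LinearMap

namespace Coend

variable {k C}

open Coalgebra

def IsRightCoideal (D : Submodule k C) : Prop :=
  ∀ x ∈ D, comul (R := k) x ∈ range (D.subtype.rTensor C)

namespace IsRightCoideal

variable {D : Submodule k C} (hD : IsRightCoideal D)

def coaction : D →ₗ[k] D ⊗[k] C :=
  (LinearEquiv.ofInjective _ (D.rTensor_subtype_injective (W := C))).symm.toLinearMap ∘ₗ
    (comul ∘ₗ D.subtype).codRestrict _ fun d => hD d d.2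

lemma subtype_rTensor_comp_coaction :
    D.subtype.rTensor C ∘ₗ hD.coaction = comul ∘ₗ D.subtype := by
  ext d
  exact congrArg Subtype.val <| LinearEquiv.apply_symm_apply
    (LinearEquiv.ofInjective _ (D.rTensor_subtype_injective (W := C))) ⟨comul (d : C), hD d d.2⟩

abbrev toFdComod [FiniteDimensional k D] : FdComod k C where
  carrier := D
  ρ := hD.coaction
  coassoc := by
    apply (cancel_left (D.rTensor_subtype_injective (W := C ⊗[k] C))).mp
    change _ ∘ₗ _ ∘ₗ hD.coaction.rTensor C ∘ₗ hD.coaction = _ ∘ₗ comul.lTensor D ∘ₗ hD.coaction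
    calc D.subtype.rTensor (C ⊗[k] C) ∘ₗ (TensorProduct.assoc k D C C).toLinearMap ∘ₗ
            hD.coaction.rTensor C ∘ₗ hD.coaction
        = (TensorProduct.assoc k C C C).toLinearMap ∘ₗ
            (D.subtype.rTensor C ∘ₗ hD.coaction).rTensor C ∘ₗ hD.coaction := by
          rw [rTensor_tensor, rTensor_comp]
          ext; simp
      _ = (TensorProduct.assoc k C C C).toLinearMap ∘ₗ comul.rTensor C ∘ₗ comul ∘ₗ D.subtype := by
          rw [subtype_rTensor_comp_coaction, rTensor_comp, comp_assoc,
            subtype_rTensor_comp_coaction]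
      _ = comul.lTensor C ∘ₗ D.subtype.rTensor C ∘ₗ hD.coaction := by
          rw [subtype_rTensor_comp_coaction]
          exact LinearMap.ext fun d => coassoc_apply (d : C)
      _ = D.subtype.rTensor (C ⊗[k] C) ∘ₗ comul.lTensor D ∘ₗ hD.coaction := by
          rw [← comp_assoc, ← comp_assoc, lTensor_comp_rTensor, rTensor_comp_lTensor]
  counit := by
    apply (cancel_left (D.rTensor_subtype_injective (W := k))).mp
    change _ ∘ₗ counit.lTensor D ∘ₗ hD.coaction = _
    rw [← comp_assoc, rTensor_comp_lTensor, ← lTensor_comp_rTensor, comp_assoc,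
      subtype_rTensor_comp_coaction, ← comp_assoc, lTensor_counit_comp_comul]
    ext d
    simp

lemma sup {D E : Submodule k C} (hD : IsRightCoideal D) (hE : IsRightCoideal E) :
    IsRightCoideal (D ⊔ E) := by
  have range_mono : ∀ {F : Submodule k C} (hle : F ≤ D ⊔ E),
      range (F.subtype.rTensor C) ≤ range ((D ⊔ E).subtype.rTensor C) := fun hle => by
    rw [← Submodule.subtype_comp_inclusion _ _ hle, rTensor_comp]
    exact range_comp_le_range _ _
  intro x hx
  obtain ⟨y, hy, z, hz, rfl⟩ := Submodule.mem_sup.mp hx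
  rw [map_add]
  exact add_mem (range_mono le_sup_left (hD y hy)) (range_mono le_sup_right (hE z hz))

end IsRightCoideal

lemma isComodHom_inclusion {D E : Submodule k C} [FiniteDimensional k D] [FiniteDimensional k E]
    (hD : IsRightCoideal D) (hE : IsRightCoideal E) (hle : D ≤ E) :
    IsComodHom k C hD.toFdComod hE.toFdComod (Submodule.inclusion hle) := by
  apply (cancel_left (E.rTensor_subtype_injective (W := C))).mp
  change _ ∘ₗ hE.coaction ∘ₗ _ = _ ∘ₗ (Submodule.inclusion hle).rTensor C ∘ₗ hD.coaction
  rw [← comp_assoc, hE.subtype_rTensor_comp_coaction, comp_assoc, Submodule.subtype_comp_inclusion,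
    ← comp_assoc, ← rTensor_comp, Submodule.subtype_comp_inclusion,
    hD.subtype_rTensor_comp_coaction]

variable (k) in
def rightCoidealSpan (c : C) : Submodule k C :=
  Submodule.span k (Set.range fun f : C →ₗ[k] k => rightSlice f (comul c))

lemma mem_rightCoidealSpan_self (c : C) : c ∈ rightCoidealSpan k c := by
  refine Submodule.subset_span ⟨counit, ?_⟩
  simp [rightSlice, lTensor_counit_comul]

lemma rightCoidealSpan_le {E : Submodule k C} (hE : IsRightCoideal E) {c : C} (hc : c ∈ E) :
    rightCoidealSpan k c ≤ E :=
  Submodule.span_le.mpr <| Set.range_subset_iff.mpr (rightSlice_mem_of_mem_range_rTensor (hE c hc))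

instance (c : C) : FiniteDimensional k (rightCoidealSpan k c) := by
  obtain ⟨J, hJ, t, ht⟩ := Submodule.exists_fg_le_eq_rTensor_subtype (comul (R := k) c)
  have : FiniteDimensional k J := Module.Finite.iff_fg.mpr hJ
  refine Submodule.finiteDimensional_of_le (S₂ := J) (Submodule.span_le.mpr ?_)
  rintro _ ⟨f, rfl⟩
  exact rightSlice_mem_of_mem_range_rTensor ⟨t, ht.symm⟩ f

/-- `mul' k k ∘ₗ map g f ∘ₗ comul` is the convolution product `g * f`; the identity is
coassociativity. -/
lemma rightSlice_comul_rightSlice_comul (g f : C →ₗ[k] k) (c : C) :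
    rightSlice g (comul (rightSlice f (comul c))) =
      rightSlice (LinearMap.mul' k k ∘ₗ TensorProduct.map g f ∘ₗ comul) (comul c) := by
  have slice_slice : rightSlice g ∘ₗ rightSlice f ∘ₗ
      (TensorProduct.assoc k C C C).symm.toLinearMap =
        rightSlice (V := C) (LinearMap.mul' k k ∘ₗ TensorProduct.map g f) :=
    TensorProduct.ext_threefold' fun x y z => by simp [smul_smul, mul_comm]
  rw [← rightSlice_rTensor, ← coassoc_symm_apply, ← comp_assoc, rightSlice_comp, ← slice_slice]
  rfl

lemma isRightCoideal_rightCoidealSpan (c : C) : IsRightCoideal (rightCoidealSpan k c) := by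
  intro x hx
  refine (Submodule.span_le (p := (range _).comap comul)).mpr ?_ hx
  rintro _ ⟨f, rfl⟩
  refine mem_range_rTensor_of_forall_rightSlice_mem fun g => ?_
  rw [rightSlice_comul_rightSlice_comul]
  exact Submodule.subset_span ⟨_, rfl⟩

def matrixCoeff (X : FdComod k C) (β : X.carrier →ₗ[k] k) : X.carrier →ₗ[k] C :=
  (TensorProduct.lid k C).toLinearMap ∘ₗ β.rTensor C ∘ₗ X.ρ

lemma canI_smulRight (X : FdComod k C) (β : X.carrier →ₗ[k] k) (x : X.carrier) :
    canI k C X (β.smulRight x) = matrixCoeff X β x := by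
  let b := Module.Free.chooseBasis k X.carrier
  calc canI k C X (β.smulRight x)
      = ∑ j, β (b j) • TensorProduct.lid k C ((b.coord j).rTensor C (X.ρ x)) := by
        simp [canI, b, rTensor]
    _ = TensorProduct.lid k C (rTensorHom C (∑ j, β (b j) • b.coord j) (X.ρ x)) := by
        simp only [map_sum, map_smul, LinearMap.sum_apply, LinearMap.smul_apply]
        rfl
    _ = matrixCoeff X β x := by
        rw [b.sum_dual_apply_smul_coord]
        rfl

lemma matrixCoeff_comp {X Y : FdComod k C} {f : Y.carrier →ₗ[k] X.carrier}
    (hf : IsComodHom k C Y X f) (β : X.carrier →ₗ[k] k) :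
    matrixCoeff X β ∘ₗ f = matrixCoeff Y (β ∘ₗ f) := by
  rw [matrixCoeff, comp_assoc, comp_assoc, hf, matrixCoeff, rTensor_comp]
  rfl

lemma canI_dinat : DinatComod k C C (canI k C) := by
  intro X Y f hf S
  suffices canI k C X ∘ₗ llcomp k _ _ _ f = canI k C Y ∘ₗ lcomp k _ f from
    LinearMap.congr_fun this S
  refine ext_smulRight fun β y => ?_
  rw [LinearMap.comp_apply, LinearMap.comp_apply, llcomp_apply', lcomp_apply', comp_smulRight,
    smulRight_comp, canI_smulRight, canI_smulRight]
  exact LinearMap.congr_fun (matrixCoeff_comp hf β) y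

lemma comul_comp_matrixCoeff (X : FdComod k C) (β : X.carrier →ₗ[k] k) :
    comul ∘ₗ matrixCoeff X β = (matrixCoeff X β).rTensor C ∘ₗ X.ρ := by
  have comul_natural : comul ∘ₗ (TensorProduct.lid k C).toLinearMap ∘ₗ β.rTensor C =
      (TensorProduct.lid k (C ⊗[k] C)).toLinearMap ∘ₗ β.rTensor (C ⊗[k] C) ∘ₗ
        comul.lTensor X.carrier :=
    TensorProduct.ext' fun x c => by simp
  have assoc_natural : (TensorProduct.lid k (C ⊗[k] C)).toLinearMap ∘ₗ
      β.rTensor (C ⊗[k] C) ∘ₗ (TensorProduct.assoc k X.carrier C C).toLinearMap =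
        ((TensorProduct.lid k C).toLinearMap ∘ₗ β.rTensor C).rTensor C :=
    TensorProduct.ext_threefold fun x c d => by simp [TensorProduct.smul_tmul']
  calc comul ∘ₗ matrixCoeff X β
      = (comul ∘ₗ (TensorProduct.lid k C).toLinearMap ∘ₗ β.rTensor C) ∘ₗ X.ρ := rfl
    _ = ((TensorProduct.lid k (C ⊗[k] C)).toLinearMap ∘ₗ β.rTensor (C ⊗[k] C)) ∘ₗ
          TensorProduct.map LinearMap.id comul ∘ₗ X.ρ := by
        rw [comul_natural]
        rfl
    _ = ((TensorProduct.lid k (C ⊗[k] C)).toLinearMap ∘ₗ β.rTensor (C ⊗[k] C) ∘ₗ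
          (TensorProduct.assoc k X.carrier C C).toLinearMap) ∘ₗ X.ρ.rTensor C ∘ₗ X.ρ := by
        rw [← X.coassoc]
        rfl
    _ = (matrixCoeff X β).rTensor C ∘ₗ X.ρ := by
        rw [assoc_natural, ← comp_assoc, ← rTensor_comp]
        rfl

lemma counit_comp_matrixCoeff (X : FdComod k C) (β : X.carrier →ₗ[k] k) :
    counit ∘ₗ matrixCoeff X β = β := by
  have counit_natural : counit ∘ₗ (TensorProduct.lid k C).toLinearMap ∘ₗ β.rTensor C =
      β ∘ₗ (TensorProduct.rid k X.carrier).toLinearMap ∘ₗ counit.lTensor X.carrier :=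
    TensorProduct.ext' fun x c => by simp [mul_comm]
  calc counit ∘ₗ matrixCoeff X β
      = (counit ∘ₗ (TensorProduct.lid k C).toLinearMap ∘ₗ β.rTensor C) ∘ₗ X.ρ := rfl
    _ = (β ∘ₗ (TensorProduct.rid k X.carrier).toLinearMap) ∘ₗ
          TensorProduct.map LinearMap.id counit ∘ₗ X.ρ := by
        rw [counit_natural]
        rfl
    _ = β := by
        rw [X.counit]
        ext x
        simp

lemma isRightCoideal_range {X : FdComod k C} {g : X.carrier →ₗ[k] C}
    (hg : comul ∘ₗ g = g.rTensor C ∘ₗ X.ρ) : IsRightCoideal (range g) := by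
  rintro _ ⟨x, rfl⟩
  refine ⟨g.rangeRestrict.rTensor C (X.ρ x), ?_⟩
  rw [← comp_apply, ← rTensor_comp, subtype_comp_codRestrict, ← comp_apply, ← hg]
  rfl

lemma isComodHom_rangeRestrict {X : FdComod k C} {g : X.carrier →ₗ[k] C}
    (hg : comul ∘ₗ g = g.rTensor C ∘ₗ X.ρ) :
    IsComodHom k C X (isRightCoideal_range hg).toFdComod g.rangeRestrict := by
  apply (cancel_left ((range g).rTensor_subtype_injective (W := C))).mp
  change _ ∘ₗ (isRightCoideal_range hg).coaction ∘ₗ _ = _ ∘ₗ g.rangeRestrict.rTensor C ∘ₗ X.ρ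
  rw [← comp_assoc, (isRightCoideal_range hg).subtype_rTensor_comp_coaction, comp_assoc,
    subtype_comp_codRestrict, ← comp_assoc, ← rTensor_comp, subtype_comp_codRestrict, hg]

lemma canI_counit_smulRight {D : Submodule k C} [FiniteDimensional k D] (hD : IsRightCoideal D)
    (d : D) : canI k C hD.toFdComod ((counit ∘ₗ D.subtype).smulRight d) = d := by
  rw [canI_smulRight, matrixCoeff, rTensor_comp]
  change TensorProduct.lid k C (counit.rTensor C ((D.subtype.rTensor C ∘ₗ hD.coaction) d)) = d
  rw [hD.subtype_rTensor_comp_coaction]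
  simp [rTensor_counit_comul]

section Lift

variable {U : Type} [AddCommGroup U] [Module k U]
  (iU : ∀ X : FdComod k C, (X.carrier →ₗ[k] X.carrier) →ₗ[k] U)

lemma DinatComod.apply_smulRight (hdin : DinatComod k C U iU) {X Y : FdComod k C}
    {f : Y.carrier →ₗ[k] X.carrier} (hf : IsComodHom k C Y X f) (β : X.carrier →ₗ[k] k)
    (y : Y.carrier) : iU X (β.smulRight (f y)) = iU Y ((β ∘ₗ f).smulRight y) := by
  simpa only [comp_smulRight, smulRight_comp] using hdin X Y f hf (β.smulRight y)

def liftOn {D : Submodule k C} [FiniteDimensional k D] (hD : IsRightCoideal D) : D →ₗ[k] U :=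
  iU hD.toFdComod ∘ₗ smulRightₗ (counit ∘ₗ D.subtype)

lemma liftOn_comp_inclusion (hdin : DinatComod k C U iU) {D E : Submodule k C}
    [FiniteDimensional k D] [FiniteDimensional k E] (hD : IsRightCoideal D)
    (hE : IsRightCoideal E) (hle : D ≤ E) :
    liftOn iU hE ∘ₗ Submodule.inclusion hle = liftOn iU hD := by
  ext d
  simp only [liftOn, comp_apply, smulRightₗ_apply]
  rw [DinatComod.apply_smulRight iU hdin (isComodHom_inclusion hD hE hle), comp_assoc,
    Submodule.subtype_comp_inclusion]

def liftFun (c : C) : U :=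
  liftOn iU (isRightCoideal_rightCoidealSpan (k := k) c) ⟨c, mem_rightCoidealSpan_self c⟩

lemma liftFun_eq (hdin : DinatComod k C U iU) {E : Submodule k C} [FiniteDimensional k E]
    (hE : IsRightCoideal E) {c : C} (hc : c ∈ E) : liftFun iU c = liftOn iU hE ⟨c, hc⟩ :=
  (LinearMap.congr_fun (liftOn_comp_inclusion iU hdin _ hE (rightCoidealSpan_le hE hc)) _).symm

def lift (hdin : DinatComod k C U iU) : C →ₗ[k] U where
  toFun := liftFun iU
  map_add' c c' := by
    have hE := (isRightCoideal_rightCoidealSpan (k := k) c).sup (isRightCoideal_rightCoidealSpan c')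
    have hc : c ∈ rightCoidealSpan k c ⊔ rightCoidealSpan k c' :=
      Submodule.mem_sup_left (mem_rightCoidealSpan_self c)
    have hc' : c' ∈ rightCoidealSpan k c ⊔ rightCoidealSpan k c' :=
      Submodule.mem_sup_right (mem_rightCoidealSpan_self c')
    rw [liftFun_eq iU hdin hE hc, liftFun_eq iU hdin hE hc',
      liftFun_eq iU hdin hE (add_mem hc hc'), ← map_add]
    rfl
  map_smul' a c := by
    rw [liftFun_eq iU hdin (isRightCoideal_rightCoidealSpan c)
      (Submodule.smul_mem _ a (mem_rightCoidealSpan_self c)), RingHom.id_apply, liftFun,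
      ← map_smul]
    rfl

lemma lift_comp_canI (hdin : DinatComod k C U iU) (X : FdComod k C) :
    lift iU hdin ∘ₗ canI k C X = iU X := by
  refine ext_smulRight fun β x => ?_
  have hg := comul_comp_matrixCoeff X β
  calc lift iU hdin (canI k C X (β.smulRight x))
      = liftOn iU (isRightCoideal_range hg) ((matrixCoeff X β).rangeRestrict x) := by
        rw [canI_smulRight]
        exact liftFun_eq iU hdin (isRightCoideal_range hg) (mem_range_self _ x)
    _ = iU X (β.smulRight x) := by
        rw [liftOn, comp_apply, smulRightₗ_apply,
          DinatComod.apply_smulRight iU hdin (isComodHom_rangeRestrict hg), comp_assoc,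
          subtype_comp_codRestrict, counit_comp_matrixCoeff]

lemma eq_lift (hdin : DinatComod k C U iU) (ψ : C →ₗ[k] U)
    (hψ : ∀ X : FdComod k C, ψ ∘ₗ canI k C X = iU X) : ψ = lift iU hdin := by
  ext c
  have hD := isRightCoideal_rightCoidealSpan (k := k) c
  have hc := mem_rightCoidealSpan_self (k := k) c
  calc ψ c = ψ (canI k C hD.toFdComod ((counit ∘ₗ Submodule.subtype _).smulRight ⟨c, hc⟩)) := by
        rw [canI_counit_smulRight]
    _ = lift iU hdin c := LinearMap.congr_fun (hψ _) _

end Lift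

end Coend

theorem coalgebra_is_coend_of_forget :
    (∀ (X : FdComod k C) (β : X.carrier →ₗ[k] k) (x : X.carrier),
        canI k C X (β.smulRight x)
          = (TensorProduct.lid k C) ((TensorProduct.map β LinearMap.id) (X.ρ x))) ∧
    DinatComod k C C (canI k C) ∧
    (∀ (U : Type) [AddCommGroup U] [Module k U]
        (iU : ∀ X : FdComod k C, (X.carrier →ₗ[k] X.carrier) →ₗ[k] U),
        DinatComod k C U iU →
        ∃! φ : C →ₗ[k] U, ∀ X : FdComod k C, φ ∘ₗ canI k C X = iU X) :=
  ⟨Coend.canI_smulRight, Coend.canI_dinat, fun _ _ _ iU hdin =>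
    ⟨Coend.lift iU hdin, Coend.lift_comp_canI iU hdin, Coend.eq_lift iU hdin⟩⟩
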